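/- arXiv:1702.04072 — 2 statements merged into one kernel-verified Lean document; each statement's English description precedes it below -/
import Mathlib

section
/- Let b ≥ 2 be an integer, m and N positive integers, and ε a real with 6/⌊N/m⌋ ≤ ε ≤ 1/b^m. Then for any nonnegative integer M and any integer a with 0 ≤ a < b^m, the Lebesgue measure of the set {x ∈ (0,1) : |F(M, N, a·b^{-m}, (a+1)·b^{-m}, ({b^j x})_{j≥0})| > εN} is less than 2·b^{2m−2}·m·e^{−ε²·N·b^m/(6m)}. -/
/-!
Put `L = M + N + m - 1` and `c = ⌊b ^ L * x⌋₊`. Then `{b ^ j * x}` lies in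
`[a / b ^ m, (a + 1) / b ^ m)` exactly when the base-`b` block of `m` digits of `c` starting at
position `M + N - 1 - j` equals `a`. So the event is a union of intervals of length `b ^ (-L)`,
one for each `c < b ^ L` whose `N` overlapping blocks hit `a` too often or too rarely. Within a
residue class of positions modulo `m` the blocks are disjoint, hence independent and uniform as
`c` ranges over `[0, b ^ L)`; an exponential moment (Chernoff) bound with parameter `ε b ^ m / 2`
in each class and a union bound over the `m` classes give the estimate, even with `2 m` in place
of `2 b ^ (2m - 2) m`.
-/

open scoped Classical

/-- F(M,N,u,v,(x_j)) = |#{j : M ≤ j < M+N, u ≤ x_j < v} − (v−u)N| -/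
noncomputable def discCount (x : ℕ → ℝ) (M N : ℕ) (u v : ℝ) : ℝ :=
  |(((Finset.Ico M (M + N)).filter (fun j => u ≤ x j ∧ x j < v)).card : ℝ) - (v - u) * N|

open Finset MeasureTheory

theorem Finset.sum_range_mul_eq_sum_sum {M : Type*} [AddCommMonoid M] (A B : ℕ) (f : ℕ → M) :
    ∑ c ∈ range (B * A), f c = ∑ u ∈ range B, ∑ l ∈ range A, f (A * u + l) := by
  simp only [Finset.sum_range]
  rw [← (finProdFinEquiv (m := B) (n := A)).sum_comp, Fintype.sum_prod_type]
  simp only [finProdFinEquiv_apply_val, add_comm]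

def digitBlock (b m c s : ℕ) : ℕ := c / b ^ s % b ^ m

theorem sum_digitBlock {M : Type*} [AddCommMonoid M] {b : ℕ} (hb : 0 < b) (m s : ℕ)
    (w : ℕ → M) :
    ∑ c ∈ range (b ^ (s + m)), w (digitBlock b m c s) = b ^ s • ∑ v ∈ range (b ^ m), w v := by
  rw [pow_add, mul_comm, sum_range_mul_eq_sum_sum, smul_sum]
  refine sum_congr rfl fun v hv => ?_
  have hblock : ∀ l ∈ range (b ^ s), digitBlock b m (b ^ s * v + l) s = v := by
    intro l hl
    rw [digitBlock, Nat.mul_add_div (pow_pos hb s), Nat.div_eq_of_lt (mem_range.1 hl), add_zero,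
      Nat.mod_eq_of_lt (mem_range.1 hv)]
  rw [sum_congr rfl fun l hl => congrArg w (hblock l hl), sum_const, card_range]

theorem sum_prod_digitBlock {R : Type*} [CommSemiring R] {b : ℕ} (hb : 0 < b) (m : ℕ)
    (w : ℕ → R) (n : ℕ) {s₀ K : ℕ} (hK : s₀ + n * m ≤ K) :
    ∑ c ∈ range (b ^ K), ∏ i ∈ range n, w (digitBlock b m c (s₀ + i * m)) =
      (b : R) ^ (K - n * m) * (∑ v ∈ range (b ^ m), w v) ^ n := by
  induction n generalizing s₀ K with
  | zero => simp
  | succ n ih =>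
    have hnm : (n + 1) * m = n * m + m := by ring
    have hsplit : b ^ K = b ^ (K - s₀ - m) * b ^ (s₀ + m) := by rw [← pow_add]; congr 1; omega
    -- write `c = b ^ (s₀ + m) * u + l`: the lowest block only sees `l`, the others only `u`
    have hlow : ∀ u, ∀ l < b ^ (s₀ + m),
        digitBlock b m (b ^ (s₀ + m) * u + l) s₀ = digitBlock b m l s₀ := by
      intro u l hl
      rw [digitBlock, digitBlock, pow_add, mul_assoc, Nat.mul_add_div (pow_pos hb s₀), add_comm,
        Nat.add_mul_mod_self_left]
    have hhigh : ∀ u i, ∀ l < b ^ (s₀ + m), digitBlock b m (b ^ (s₀ + m) * u + l)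
        (s₀ + (i + 1) * m) = digitBlock b m u (0 + i * m) := by
      intro u i l hl
      rw [digitBlock, digitBlock, show s₀ + (i + 1) * m = (s₀ + m) + i * m by ring,
        pow_add b (s₀ + m), ← Nat.div_div_eq_div_mul, Nat.mul_add_div (pow_pos hb _),
        Nat.div_eq_of_lt hl, add_zero, zero_add]
    calc ∑ c ∈ range (b ^ K), ∏ i ∈ range (n + 1), w (digitBlock b m c (s₀ + i * m))
        = ∑ u ∈ range (b ^ (K - s₀ - m)), ∑ l ∈ range (b ^ (s₀ + m)),
            w (digitBlock b m l s₀) * ∏ i ∈ range n, w (digitBlock b m u (0 + i * m)) := by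
          rw [hsplit, sum_range_mul_eq_sum_sum]
          refine sum_congr rfl fun u _ => sum_congr rfl fun l hl => ?_
          rw [prod_range_succ', mul_comm, zero_mul, add_zero, hlow u l (mem_range.1 hl)]
          simp only [hhigh u _ l (mem_range.1 hl)]
      _ = (b : R) ^ s₀ * (∑ v ∈ range (b ^ m), w v) *
            ∑ u ∈ range (b ^ (K - s₀ - m)), ∏ i ∈ range n, w (digitBlock b m u (0 + i * m)) := by
          simp only [← sum_mul, sum_digitBlock hb, nsmul_eq_mul, Nat.cast_pow, ← mul_sum]
      _ = (b : R) ^ (K - (n + 1) * m) * (∑ v ∈ range (b ^ m), w v) ^ (n + 1) := by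
          rw [ih (s₀ := 0) (K := K - s₀ - m) (by omega),
            show K - (n + 1) * m = s₀ + (K - s₀ - m - n * m) by omega, pow_add]
          ring

def blockHits (b m a n s₀ c : ℕ) : ℕ := #{i ∈ range n | digitBlock b m c (s₀ + i * m) = a}

theorem sum_pow_blockHits {b m a : ℕ} (hb : 0 < b) (ha : a < b ^ m) {n s₀ K : ℕ}
    (hK : s₀ + n * m ≤ K) (y : ℝ) :
    ∑ c ∈ range (b ^ K), y ^ blockHits b m a n s₀ c =
      (b : ℝ) ^ (K - n * m) * (y + ((b : ℝ) ^ m - 1)) ^ n := by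
  have hpow : ∀ c, y ^ blockHits b m a n s₀ c =
      ∏ i ∈ range n, (fun v => if v = a then y else 1) (digitBlock b m c (s₀ + i * m)) := by
    intro c
    rw [blockHits, prod_ite, prod_const, prod_const_one, mul_one]
  have hsum : ∑ v ∈ range (b ^ m), (if v = a then y else 1) = y + ((b : ℝ) ^ m - 1) := by
    rw [← add_sum_erase _ _ (mem_range.2 ha), if_pos rfl,
      sum_congr rfl fun v hv => if_neg (ne_of_mem_erase hv), sum_const,
      card_erase_of_mem (mem_range.2 ha), card_range, nsmul_one, Nat.cast_sub (Nat.one_le_of_lt ha)]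
    push_cast
    ring
  rw [sum_congr rfl fun c _ => hpow c,
    sum_prod_digitBlock hb m (fun v => if v = a then y else 1) n hK, hsum]

theorem card_filter_lt_le_sum_exp {ι : Type*} (s : Finset ι) (f : ι → ℝ) (θ : ℝ) :
    (#{i ∈ s | θ < f i} : ℝ) ≤ ∑ i ∈ s, Real.exp (f i - θ) := by
  rw [card_filter, Nat.cast_sum]
  refine sum_le_sum fun i _ => ?_
  split_ifs with h
  · simpa using Real.one_le_exp (sub_nonneg.2 h.le)
  · simpa using (Real.exp_pos _).le

theorem add_sub_one_pow_le_pow_mul_exp {B y : ℝ} (hB : 1 ≤ B) (hy : 0 ≤ y) (n : ℕ) :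
    (y + (B - 1)) ^ n ≤ B ^ n * Real.exp (n / B * (y - 1)) := by
  have hB₀ : 0 < B := by linarith
  have hfactor : y + (B - 1) = B * (1 + (y - 1) / B) := by field_simp; ring
  calc (y + (B - 1)) ^ n = B ^ n * (1 + (y - 1) / B) ^ n := by rw [hfactor, mul_pow]
    _ ≤ B ^ n * Real.exp ((y - 1) / B) ^ n := by
        gcongr
        · rw [show 1 + (y - 1) / B = (y + (B - 1)) / B by field_simp; ring]
          exact div_nonneg (by linarith) hB₀.le
        · linarith [Real.add_one_le_exp ((y - 1) / B)]
    _ = B ^ n * Real.exp (n / B * (y - 1)) := by rw [← Real.exp_nat_mul]; ring_nf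

theorem card_blockHits_tail_le {b m a : ℕ} (hb : 0 < b) (ha : a < b ^ m) {n s₀ K : ℕ}
    (hK : s₀ + n * m ≤ K) {μ : ℝ} (hμ : |μ| ≤ 1) (t : ℝ) :
    (#{c ∈ range (b ^ K) | |μ| * t < μ * (blockHits b m a n s₀ c - n / (b : ℝ) ^ m)} : ℝ) ≤
      (b : ℝ) ^ K * Real.exp (n / (b : ℝ) ^ m * μ ^ 2 - |μ| * t) := by
  set p : ℝ := n / (b : ℝ) ^ m
  calc (#{c ∈ range (b ^ K) | |μ| * t < μ * (blockHits b m a n s₀ c - p)} : ℝ)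
      ≤ ∑ c ∈ range (b ^ K), Real.exp (μ * (blockHits b m a n s₀ c - p) - |μ| * t) :=
        card_filter_lt_le_sum_exp _ _ _
    _ = Real.exp (-(μ * p) - |μ| * t) *
          ∑ c ∈ range (b ^ K), Real.exp μ ^ blockHits b m a n s₀ c := by
        rw [mul_sum]
        refine sum_congr rfl fun c _ => ?_
        rw [← Real.exp_nat_mul, ← Real.exp_add]
        ring_nf
    _ = Real.exp (-(μ * p) - |μ| * t) *
          ((b : ℝ) ^ (K - n * m) * (Real.exp μ + ((b : ℝ) ^ m - 1)) ^ n) := by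
        rw [sum_pow_blockHits hb ha hK]
    _ ≤ Real.exp (-(μ * p) - |μ| * t) * ((b : ℝ) ^ K * Real.exp (p * (Real.exp μ - 1))) := by
        refine mul_le_mul_of_nonneg_left ?_ (Real.exp_pos _).le
        have hB : (1 : ℝ) ≤ (b : ℝ) ^ m := one_le_pow₀ (by exact_mod_cast hb)
        calc (b : ℝ) ^ (K - n * m) * (Real.exp μ + ((b : ℝ) ^ m - 1)) ^ n
            ≤ (b : ℝ) ^ (K - n * m) * (((b : ℝ) ^ m) ^ n * Real.exp (p * (Real.exp μ - 1))) := by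
              gcongr
              exact add_sub_one_pow_le_pow_mul_exp hB (Real.exp_pos μ).le n
          _ = (b : ℝ) ^ K * Real.exp (p * (Real.exp μ - 1)) := by
              rw [← mul_assoc, ← pow_mul, ← pow_add, mul_comm m n, Nat.sub_add_cancel (by omega)]
    _ = (b : ℝ) ^ K * Real.exp (p * (Real.exp μ - 1 - μ) - |μ| * t) := by
        rw [mul_left_comm, ← Real.exp_add]
        ring_nf
    _ ≤ (b : ℝ) ^ K * Real.exp (p * μ ^ 2 - |μ| * t) := by
        gcongr
        exact (le_abs_self _).trans (Real.abs_exp_sub_one_sub_id_le hμ)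

theorem card_abs_blockHits_sub_gt_le {b m a : ℕ} (hb : 0 < b) (ha : a < b ^ m) {n s₀ K : ℕ}
    (hK : s₀ + n * m ≤ K) {μ : ℝ} (hμ₀ : 0 < μ) (hμ₁ : μ ≤ 1) (t : ℝ) :
    (#{c ∈ range (b ^ K) | t < |(blockHits b m a n s₀ c : ℝ) - n / (b : ℝ) ^ m|} : ℝ) ≤
      2 * (b : ℝ) ^ K * Real.exp (n / (b : ℝ) ^ m * μ ^ 2 - μ * t) := by
  have hsub : {c ∈ range (b ^ K) | t < |(blockHits b m a n s₀ c : ℝ) - n / (b : ℝ) ^ m|} ⊆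
      {c ∈ range (b ^ K) | |μ| * t < μ * (blockHits b m a n s₀ c - n / (b : ℝ) ^ m)} ∪
      {c ∈ range (b ^ K) | |-μ| * t < -μ * (blockHits b m a n s₀ c - n / (b : ℝ) ^ m)} := by
    intro c hc
    simp only [mem_filter, mem_union, abs_neg, abs_of_pos hμ₀] at hc ⊢
    rcases lt_abs.1 hc.2 with h | h
    · exact Or.inl ⟨hc.1, by nlinarith⟩
    · exact Or.inr ⟨hc.1, by nlinarith⟩
  have hμ : |μ| ≤ 1 := by rwa [abs_of_pos hμ₀]
  calc _ ≤ (#{c ∈ range (b ^ K) | |μ| * t < μ * (blockHits b m a n s₀ c - n / (b : ℝ) ^ m)} +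
        #{c ∈ range (b ^ K) | |-μ| * t < -μ * (blockHits b m a n s₀ c - n / (b : ℝ) ^ m)} : ℝ) :=
        mod_cast (card_le_card hsub).trans (card_union_le _ _)
    _ ≤ (b : ℝ) ^ K * Real.exp (n / (b : ℝ) ^ m * μ ^ 2 - |μ| * t) +
          (b : ℝ) ^ K * Real.exp (n / (b : ℝ) ^ m * (-μ) ^ 2 - |-μ| * t) :=
        add_le_add (card_blockHits_tail_le hb ha hK hμ t)
          (card_blockHits_tail_le hb ha hK (by rwa [abs_neg]) t)
    _ = _ := by rw [abs_neg, neg_sq, abs_of_pos hμ₀]; ring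

theorem card_filter_range_eq_sum_residues {m : ℕ} (hm : 0 < m) (N : ℕ) (P : ℕ → Prop)
    [DecidablePred P] :
    #{s ∈ range N | P s} = ∑ r ∈ range m, #{i ∈ range ((N + m - 1 - r) / m) | P (r + i * m)} := by
  rw [card_eq_sum_card_fiberwise (f := (· % m)) (t := range m)
    fun s _ => mem_range.2 (Nat.mod_lt s hm)]
  refine sum_congr rfl fun r hr => ?_
  have hr : r < m := mem_range.1 hr
  have hlt : ∀ i, i < (N + m - 1 - r) / m ↔ r + i * m < N := by
    intro i
    rw [← Nat.add_one_le_iff, Nat.le_div_iff_mul_le hm, add_mul, one_mul]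
    omega
  symm
  refine card_nbij' (fun i => r + i * m) (fun s => s / m) ?_ ?_ ?_ ?_
  · intro i hi
    simp only [mem_coe, mem_filter, mem_range] at hi ⊢
    refine ⟨⟨(hlt i).1 hi.1, hi.2⟩, ?_⟩
    rw [Nat.add_mul_mod_self_right, Nat.mod_eq_of_lt hr]
  · intro s hs
    simp only [mem_coe, mem_filter, mem_range] at hs ⊢
    have hs' : r + s / m * m = s := by rw [← hs.2]; exact Nat.mod_add_div' s m
    rw [hlt, hs']
    exact ⟨hs.1.1, hs.1.2⟩
  · intro i _
    simp only
    rw [Nat.add_mul_div_right _ _ hm, Nat.div_eq_of_lt hr, zero_add]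
  · intro s hs
    simp only [mem_coe, mem_filter, mem_range] at hs ⊢
    rw [← hs.2]
    exact Nat.mod_add_div' s m

theorem abs_card_digitBlock_sub_le {b m a : ℕ} (hm : 0 < m) (N c : ℕ) {t : ℝ}
    (ht : ∀ r < m, |(blockHits b m a ((N + m - 1 - r) / m) r c : ℝ) -
      ((N + m - 1 - r) / m : ℕ) / (b : ℝ) ^ m| ≤ t) :
    |(#{s ∈ range N | digitBlock b m c s = a} : ℝ) - N / (b : ℝ) ^ m| ≤ m * t := by
  have hcount := card_filter_range_eq_sum_residues hm N (fun s => digitBlock b m c s = a)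
  have hN := card_filter_range_eq_sum_residues hm N (fun _ => True)
  simp only [filter_true, card_range] at hN
  have hN' : (N : ℝ) / (b : ℝ) ^ m = ∑ r ∈ range m, ((N + m - 1 - r) / m : ℕ) / (b : ℝ) ^ m := by
    rw [← sum_div]
    exact_mod_cast congrArg (fun k : ℕ => (k : ℝ) / (b : ℝ) ^ m) hN
  rw [hcount, Nat.cast_sum, hN', ← sum_sub_distrib]
  calc _ ≤ ∑ r ∈ range m, |(blockHits b m a ((N + m - 1 - r) / m) r c : ℝ) -
        ((N + m - 1 - r) / m : ℕ) / (b : ℝ) ^ m| := abs_sum_le_sum_abs _ _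
    _ ≤ ∑ _r ∈ range m, t := sum_le_sum fun r hr => ht r (mem_range.1 hr)
    _ = m * t := by rw [sum_const, card_range, nsmul_eq_mul]

theorem chernoff_exponent_lt {B ε n N m : ℝ} (hB : 0 < B) (hε : 0 < ε) (hm : 0 < m)
    (hq : 6 ≤ N / m) (hn : n ≤ N / m + 1) :
    n / B * (ε * B / 2) ^ 2 - ε * B / 2 * (ε * (N / m)) < -(ε ^ 2 * N * B / (6 * m)) := by
  have hεB : 0 < ε ^ 2 * B := by positivity
  have key : n / B * (ε * B / 2) ^ 2 - ε * B / 2 * (ε * (N / m)) + ε ^ 2 * N * B / (6 * m) =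
      ε ^ 2 * B * (n / 4 - N / m / 3) := by
    field_simp
    ring
  nlinarith

theorem card_digitBlock_deviation_lt {b m a N L : ℕ} (hb : 0 < b) (hm : 0 < m) (ha : a < b ^ m)
    (hL : N + m - 1 ≤ L) {ε : ℝ} (hε : 0 < ε) (hεb : ε * (b : ℝ) ^ m ≤ 1)
    (hq : 6 ≤ (N : ℝ) / m) :
    (#{c ∈ range (b ^ L) |
        ε * N < |(#{s ∈ range N | digitBlock b m c s = a} : ℝ) - N / (b : ℝ) ^ m|} : ℝ) <
      2 * m * (b : ℝ) ^ L * Real.exp (-(ε ^ 2 * N * (b : ℝ) ^ m / (6 * m))) := by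
  set n : ℕ → ℕ := fun r => (N + m - 1 - r) / m
  set t : ℝ := ε * (N / m) with ht
  set μ : ℝ := ε * (b : ℝ) ^ m / 2 with hμ
  set T : ℕ → Finset ℕ := fun r =>
    {c ∈ range (b ^ L) | t < |(blockHits b m a (n r) r c : ℝ) - n r / (b : ℝ) ^ m|}
  have hm' : (0 : ℝ) < m := by exact_mod_cast hm
  have hB : (0 : ℝ) < (b : ℝ) ^ m := by positivity
  have hcover : {c ∈ range (b ^ L) |
      ε * N < |(#{s ∈ range N | digitBlock b m c s = a} : ℝ) - N / (b : ℝ) ^ m|} ⊆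
      (range m).biUnion T := by
    intro c hc
    rw [mem_filter] at hc
    by_contra hnot
    simp only [mem_biUnion, mem_range, not_exists, not_and, T, mem_filter, hc.1, true_and,
      not_lt] at hnot
    have := abs_card_digitBlock_sub_le hm N c hnot
    rw [show (m : ℝ) * t = ε * N by rw [ht]; field_simp] at this
    linarith [hc.2]
  have hclass : ∀ r ∈ range m, (#(T r) : ℝ) <
      2 * (b : ℝ) ^ L * Real.exp (-(ε ^ 2 * N * (b : ℝ) ^ m / (6 * m))) := by
    intro r hr
    have hr : r < m := mem_range.1 hr
    have hK : r + n r * m ≤ L := by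
      have := Nat.div_mul_le_self (N + m - 1 - r) m
      simp only [n]
      omega
    have hn : (n r : ℝ) ≤ N / m + 1 := by
      calc (n r : ℝ) ≤ ((N + m - 1 - r : ℕ) : ℝ) / m := Nat.cast_div_le
        _ ≤ (N + m) / m := by gcongr; norm_cast; omega
        _ = N / m + 1 := by field_simp
    refine (card_abs_blockHits_sub_gt_le hb ha hK (μ := μ) (by positivity) (by rw [hμ]; linarith)
      t).trans_lt ?_
    gcongr
    exact chernoff_exponent_lt hB hε hm' hq hn
  calc _ ≤ (#((range m).biUnion T) : ℝ) := by exact_mod_cast card_le_card hcover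
    _ ≤ ∑ r ∈ range m, (#(T r) : ℝ) := by exact_mod_cast card_biUnion_le
    _ < ∑ _r ∈ range m, 2 * (b : ℝ) ^ L * Real.exp (-(ε ^ 2 * N * (b : ℝ) ^ m / (6 * m))) :=
        sum_lt_sum_of_nonempty (nonempty_range_iff.2 hm.ne') hclass
    _ = _ := by rw [sum_const, card_range, nsmul_eq_mul]; ring

theorem fract_mem_Ico_iff_floor_mul_mod {y : ℝ} (hy : 0 ≤ y) {q a : ℕ} (ha : a < q) :
    ((a : ℝ) / q ≤ Int.fract y ∧ Int.fract y < ((a : ℝ) + 1) / q) ↔ ⌊q * y⌋₊ % q = a := by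
  have hq : (0 : ℝ) < q := by exact_mod_cast (a.zero_le.trans_lt ha)
  have hf₀ : 0 ≤ q * Int.fract y := mul_nonneg hq.le (Int.fract_nonneg y)
  have hsplit : ⌊q * y⌋₊ = ⌊q * Int.fract y⌋₊ + q * ⌊y⌋₊ := by
    rw [← Nat.floor_add_natCast hf₀]
    congr 1
    push_cast
    rw [natCast_floor_eq_intCast_floor hy]
    linear_combination (-(q : ℝ)) * Int.floor_add_fract y
  have hlow : ⌊q * Int.fract y⌋₊ < q := by
    rw [Nat.floor_lt hf₀]
    nlinarith [Int.fract_lt_one y]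
  rw [hsplit, Nat.add_mul_mod_self_left, Nat.mod_eq_of_lt hlow, Nat.floor_eq_iff hf₀,
    div_le_iff₀ hq, lt_div_iff₀ hq, mul_comm (Int.fract y)]

theorem floor_pow_mul_eq_floor_pow_mul_div {b : ℕ} (hb : 0 < b) (x : ℝ) {j L : ℕ} (hj : j ≤ L) :
    ⌊(b : ℝ) ^ j * x⌋₊ = ⌊(b : ℝ) ^ L * x⌋₊ / b ^ (L - j) := by
  rw [← Nat.floor_div_natCast]
  congr 1
  rw [Nat.cast_pow, eq_div_iff (by positivity), mul_right_comm, ← pow_add, Nat.add_sub_cancel' hj]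

theorem fract_pow_mul_mem_Ico_iff {b m a : ℕ} (hb : 0 < b) (ha : a < b ^ m) {x : ℝ} (hx : 0 ≤ x)
    {j L : ℕ} (hjL : j + m ≤ L) :
    ((a : ℝ) / (b : ℝ) ^ m ≤ Int.fract ((b : ℝ) ^ j * x) ∧
        Int.fract ((b : ℝ) ^ j * x) < ((a : ℝ) + 1) / (b : ℝ) ^ m) ↔
      digitBlock b m ⌊(b : ℝ) ^ L * x⌋₊ (L - m - j) = a := by
  have h := fract_mem_Ico_iff_floor_mul_mod (y := (b : ℝ) ^ j * x) (by positivity) ha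
  rw [Nat.cast_pow, ← mul_assoc, ← pow_add,
    floor_pow_mul_eq_floor_pow_mul_div hb x (j := m + j) (L := L) (by omega)] at h
  rw [h, digitBlock, show L - (m + j) = L - m - j by omega]

theorem discCount_orbit_eq {b m a : ℕ} (hb : 0 < b) (ha : a < b ^ m) {x : ℝ} (hx : 0 ≤ x)
    (M N : ℕ) :
    discCount (fun j => Int.fract ((b : ℝ) ^ j * x)) M N
        ((a : ℝ) / (b : ℝ) ^ m) (((a : ℝ) + 1) / (b : ℝ) ^ m) =
      |(#{s ∈ range N | digitBlock b m ⌊(b : ℝ) ^ (M + N + m - 1) * x⌋₊ s = a} : ℝ) -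
        N / (b : ℝ) ^ m| := by
  have hcard : #{j ∈ Ico M (M + N) | (a : ℝ) / (b : ℝ) ^ m ≤ Int.fract ((b : ℝ) ^ j * x) ∧
        Int.fract ((b : ℝ) ^ j * x) < ((a : ℝ) + 1) / (b : ℝ) ^ m} =
      #{s ∈ range N | digitBlock b m ⌊(b : ℝ) ^ (M + N + m - 1) * x⌋₊ s = a} := by
    refine card_nbij' (fun j => M + N - 1 - j) (fun s => M + N - 1 - s) ?_ ?_ ?_ ?_
    · intro j hj
      simp only [mem_coe, mem_filter, mem_Ico, mem_range] at hj ⊢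
      rw [fract_pow_mul_mem_Ico_iff hb ha hx (L := M + N + m - 1) (by omega)] at hj
      rw [show M + N + m - 1 - m - j = M + N - 1 - j by omega] at hj
      exact ⟨by omega, hj.2⟩
    · intro s hs
      simp only [mem_coe, mem_filter, mem_Ico, mem_range] at hs ⊢
      rw [fract_pow_mul_mem_Ico_iff hb ha hx (L := M + N + m - 1) (by omega),
        show M + N + m - 1 - m - (M + N - 1 - s) = s by omega]
      exact ⟨by omega, hs.2⟩
    · intro j hj
      simp only [mem_coe, mem_filter, mem_Ico] at hj
      dsimp only
      omega
    · intro s hs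
      simp only [mem_coe, mem_filter, mem_range] at hs
      dsimp only
      omega
  rw [discCount, hcard, add_div, add_sub_cancel_left, one_div_mul_eq_div]

theorem volume_le_of_floor_mul_mem {q : ℕ} (hq : 0 < q) {E : Set ℝ} {B : Finset ℕ}
    (hE : ∀ x ∈ E, 0 ≤ x ∧ ⌊(q : ℝ) * x⌋₊ ∈ B) :
    volume E ≤ ENNReal.ofReal (#B / q) := by
  have hq' : (0 : ℝ) < q := by exact_mod_cast hq
  have hcover : E ⊆ ⋃ c ∈ B, Set.Ico ((c : ℝ) / q) ((c + 1) / q) := by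
    intro x hx
    obtain ⟨hx₀, hB⟩ := hE x hx
    refine Set.mem_biUnion hB ⟨?_, ?_⟩
    · rw [div_le_iff₀ hq', mul_comm]
      exact Nat.floor_le (by positivity)
    · rw [lt_div_iff₀ hq', mul_comm]
      exact Nat.lt_floor_add_one _
  calc volume E ≤ ∑ c ∈ B, volume (Set.Ico ((c : ℝ) / q) ((c + 1) / q)) :=
        (measure_mono hcover).trans (measure_biUnion_finset_le B _)
    _ = ∑ _c ∈ B, ENNReal.ofReal (1 / q) := by
        refine sum_congr rfl fun c _ => ?_
        rw [Real.volume_Ico, ← sub_div, add_sub_cancel_left]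
    _ = ENNReal.ofReal (#B / q) := by
        rw [sum_const, nsmul_eq_mul, ← ENNReal.ofReal_natCast, ← ENNReal.ofReal_mul (by positivity),
          mul_one_div]

theorem volume_discCount_gt_le {b m a : ℕ} (hb : 0 < b) (ha : a < b ^ m) (M N : ℕ) (θ : ℝ) :
    volume {x ∈ Set.Ioo (0 : ℝ) 1 | θ < |discCount (fun j => Int.fract ((b : ℝ) ^ j * x)) M N
        ((a : ℝ) / (b : ℝ) ^ m) (((a : ℝ) + 1) / (b : ℝ) ^ m)|} ≤
      ENNReal.ofReal (#{c ∈ range (b ^ (M + N + m - 1)) |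
        θ < |(#{s ∈ range N | digitBlock b m c s = a} : ℝ) - N / (b : ℝ) ^ m|} /
          (b : ℝ) ^ (M + N + m - 1)) := by
  have hbL : (0 : ℝ) < (b : ℝ) ^ (M + N + m - 1) := by positivity
  refine (volume_le_of_floor_mul_mem (q := b ^ (M + N + m - 1)) (pow_pos hb _) ?_).trans_eq
    (by rw [Nat.cast_pow])
  rintro x ⟨hx, hdev⟩
  refine ⟨hx.1.le, ?_⟩
  rw [discCount_orbit_eq hb ha hx.1.le, abs_abs] at hdev
  rw [Nat.cast_pow, mem_filter, mem_range, Nat.floor_lt (mul_nonneg hbL.le hx.1.le)]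
  exact ⟨by push_cast; nlinarith [hx.2], hdev⟩

theorem one_lt_two_mul_mul_exp {B ε n k : ℝ} (hB : 1 ≤ B) (hε : 0 ≤ ε) (hεB : ε * B ≤ 1)
    (hnk : n ≤ k) (hk : 1 ≤ k) :
    1 < 2 * k * Real.exp (-(ε ^ 2 * n * B / (6 * k))) := by
  have hε₁ : ε ^ 2 * B ≤ 1 := by nlinarith
  have hexponent : ε ^ 2 * n * B / (6 * k) ≤ 1 / 6 := by
    rw [div_le_iff₀ (by positivity)]
    nlinarith [mul_le_mul_of_nonneg_left hnk (by positivity : 0 ≤ ε ^ 2 * B),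
      mul_le_mul_of_nonneg_right hε₁ (by linarith : (0 : ℝ) ≤ k)]
  have hexp := Real.add_one_le_exp (-(ε ^ 2 * n * B / (6 * k)))
  nlinarith

theorem stmt1_general (b m N : ℕ) (hm : 0 < m)
    (ε : ℝ) (hε₁ : 6 / ((N / m : ℕ) : ℝ) ≤ ε) (hε₂ : ε ≤ 1 / (b : ℝ) ^ m)
    (M a : ℕ) (ha : a < b ^ m) :
    MeasureTheory.volume {x ∈ Set.Ioo (0 : ℝ) 1 |
        ε * N < |discCount (fun j => Int.fract ((b : ℝ) ^ j * x)) M N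
          ((a : ℝ) / (b : ℝ) ^ m) (((a : ℝ) + 1) / (b : ℝ) ^ m)|} <
      ENNReal.ofReal (2 * (b : ℝ) ^ (2 * m - 2) * m *
        Real.exp (-(ε ^ 2 * N * (b : ℝ) ^ m / (6 * m)))) := by
  have hb : 0 < b := Nat.pos_of_ne_zero fun hb => by simp [hb, hm.ne'] at ha
  have hB : (1 : ℝ) ≤ (b : ℝ) ^ m := one_le_pow₀ (by exact_mod_cast hb)
  have hm' : (1 : ℝ) ≤ m := by exact_mod_cast hm
  have hεB : ε * (b : ℝ) ^ m ≤ 1 := by rwa [le_div_iff₀ (by positivity)] at hε₂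
  have hslack : 2 * m * Real.exp (-(ε ^ 2 * N * (b : ℝ) ^ m / (6 * m))) ≤
      2 * (b : ℝ) ^ (2 * m - 2) * m * Real.exp (-(ε ^ 2 * N * (b : ℝ) ^ m / (6 * m))) := by
    have hb' : (1 : ℝ) ≤ (b : ℝ) ^ (2 * m - 2) := one_le_pow₀ (by exact_mod_cast hb)
    linarith [mul_le_mul_of_nonneg_right hb'
      (by positivity : 0 ≤ 2 * m * Real.exp (-(ε ^ 2 * N * (b : ℝ) ^ m / (6 * m))))]
  refine lt_of_lt_of_le ?_ (ENNReal.ofReal_le_ofReal hslack)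
  rcases (N / m).eq_zero_or_pos with hq | hq
  · -- `6 / 0 = 0`: the hypothesis on `ε` only says `0 ≤ ε`, and the bound exceeds `1`
    rw [hq, Nat.cast_zero, div_zero] at hε₁
    have hNm : (N : ℝ) ≤ m := by exact_mod_cast (Nat.div_eq_zero_iff_lt hm).1 hq |>.le
    calc _ ≤ volume (Set.Ioo (0 : ℝ) 1) := measure_mono fun x hx => hx.1
      _ = ENNReal.ofReal 1 := by simp
      _ < _ := (ENNReal.ofReal_lt_ofReal_iff (by positivity)).2
        (one_lt_two_mul_mul_exp hB hε₁ hεB hNm hm')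
  · have hq₆ : 6 * (b : ℝ) ^ m ≤ (N / m : ℕ) := by
      have := hε₁.trans hε₂
      rwa [div_le_div_iff₀ (by exact_mod_cast hq) (by positivity), one_mul] at this
    have hNm : 6 ≤ (N : ℝ) / m := by linarith [(Nat.cast_div_le : ((N / m : ℕ) : ℝ) ≤ N / m)]
    have hε : 0 < ε := lt_of_lt_of_le (by positivity) hε₁
    have hcard := card_digitBlock_deviation_lt hb hm ha (L := M + N + m - 1) (by omega) hε hεB hNm
    refine (volume_discCount_gt_le hb ha M N (ε * N)).trans_lt ?_
    rw [ENNReal.ofReal_lt_ofReal_iff (by positivity), div_lt_iff₀ (by positivity)]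
    linarith

theorem stmt1 (b m N : ℕ) (hb : 2 ≤ b) (hm : 0 < m) (hN : 0 < N)
    (ε : ℝ) (hε₁ : 6 / ((N / m : ℕ) : ℝ) ≤ ε) (hε₂ : ε ≤ 1 / (b : ℝ) ^ m)
    (M a : ℕ) (ha : a < b ^ m) :
    MeasureTheory.volume {x ∈ Set.Ioo (0 : ℝ) 1 |
        ε * N < |discCount (fun j => Int.fract ((b : ℝ) ^ j * x)) M N
          ((a : ℝ) / (b : ℝ) ^ m) (((a : ℝ) + 1) / (b : ℝ) ^ m)|} <
      ENNReal.ofReal (2 * (b : ℝ) ^ (2 * m - 2) * m *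
        Real.exp (-(ε ^ 2 * N * (b : ℝ) ^ m / (6 * m)))) :=
  stmt1_general b m N hm ε hε₁ hε₂ M a ha
end

section
/- For every positive integer n, Σ_{j=1}^{n} 2^{j-1} · (2j+2)/(2^{2j+2} + 1) < 3/4. -/
/-! Dropping the `+ 1` from each denominator bounds the `j`-th term by `(j + 1) / 2 ^ (j + 2)`,
whose partial sums have the closed form `3 / 4 - (n + 3) / 2 ^ (n + 2) < 3 / 4`. -/

open Finset

lemma sum_Icc_succ_div_two_pow (n : ℕ) :
    ∑ j ∈ Icc 1 n, ((j : ℝ) + 1) / 2 ^ (j + 2) = 3 / 4 - ((n : ℝ) + 3) / 2 ^ (n + 2) := by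
  induction n with
  | zero => norm_num
  | succ n ih =>
    rw [sum_Icc_succ_top (by omega), ih]
    push_cast
    field_simp
    ring

lemma two_pow_pred_mul_div_le {j : ℕ} (hj : 1 ≤ j) :
    (2 : ℝ) ^ (j - 1) * ((2 * (j : ℝ) + 2) / (2 ^ (2 * j + 2) + 1))
      ≤ ((j : ℝ) + 1) / 2 ^ (j + 2) :=
  calc (2 : ℝ) ^ (j - 1) * ((2 * (j : ℝ) + 2) / (2 ^ (2 * j + 2) + 1))
      ≤ 2 ^ (j - 1) * ((2 * (j : ℝ) + 2) / 2 ^ (2 * j + 2)) := by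
        gcongr
        exact le_add_of_nonneg_right zero_le_one
    _ = ((j : ℝ) + 1) / 2 ^ (j + 2) := by
        obtain ⟨k, rfl⟩ := Nat.exists_eq_add_of_le' hj
        simp only [Nat.add_sub_cancel]
        field_simp
        ring

theorem stmt8_general (n : ℕ) :
    ∑ j ∈ Finset.Icc 1 n,
      (2 : ℝ) ^ (j - 1) * ((2 * (j : ℝ) + 2) / (2 ^ (2 * j + 2) + 1)) < 3 / 4 := by
  calc ∑ j ∈ Finset.Icc 1 n,
        (2 : ℝ) ^ (j - 1) * ((2 * (j : ℝ) + 2) / (2 ^ (2 * j + 2) + 1))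
      ≤ ∑ j ∈ Icc 1 n, ((j : ℝ) + 1) / 2 ^ (j + 2) :=
        sum_le_sum fun j hj ↦ two_pow_pred_mul_div_le (mem_Icc.mp hj).1
    _ = 3 / 4 - ((n : ℝ) + 3) / 2 ^ (n + 2) := sum_Icc_succ_div_two_pow n
    _ < 3 / 4 := sub_lt_self _ (by positivity)

theorem stmt8 (n : ℕ) (hn : 1 ≤ n) :
    ∑ j ∈ Finset.Icc 1 n,
      (2 : ℝ) ^ (j - 1) * ((2 * (j : ℝ) + 2) / (2 ^ (2 * j + 2) + 1)) < 3 / 4 :=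
  stmt8_general n
end
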